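/- Let d ≥ 3, let I ⊆ ℝ be an open interval, and let α : I × ℝ^{2d} → ℂ be continuously differentiable. Assume that for every t ∈ I and x ∈ ℝ^d the integrals ρ(t,y) := ∫_{ℝ^d} |α(t,y,w)|² dw, F(t,x) := −∫_{ℝ^d} ∇Γ(x−y) ρ(t,y) dy, φ(t,y) := ∫_{ℝ^d} conj(α)(t,y,w) ∇_w α(t,y,w) dw, and K(t,x) := −∫_{ℝ^d} ∇Γ(x−y) · φ(t,y) dy converge absolutely, that Re K(t,x) = 0 for all (t,x), and that α satisfies the Hamiltonian Vlasov–Poisson equation ∂_t α(t,x,v) = −v · ∇_x α(t,x,v) − F(t,x) · ∇_v α(t,x,v) + K(t,x) α(t,x,v) on I × ℝ^{2d}. Then f := |α|² satisfies the classical Vlasov–Poisson equation ∂_t f(t,x,v) + v · ∇_x f(t,x,v) + F(t,x) · ∇_v f(t,x,v) = 0 on I × ℝ^{2d}. -/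

import Mathlib

/-!
Since `d‖α‖² = 2 ⟪α, dα⟫_ℝ = 2 Re (conj α · dα)`, applying the Vlasov operator
`∂ₜ + v·∇ₓ + F·∇ᵥ` to `f = ‖α‖²` gives `2 Re (conj α · K α) = 2 (Re K) ‖α‖²`,
which vanishes because the phase force `K` is purely imaginary.
-/

open MeasureTheory
open scoped ENNReal NNReal

/-- `ℝ^d` as a Euclidean space. -/
abbrev E (d : ℕ) : Type := EuclideanSpace ℝ (Fin d)

/-- The gradient `∇Γ(x) = x / (c_d |x|^d)` of the Newtonian potential on `ℝ^d`,
where `c_d = d·ω_d` is the surface measure of the unit sphere `S^{d-1}`. -/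
noncomputable def gradNewton (d : ℕ) (x : E d) : E d :=
  (((d : ℝ) * (volume (Metric.ball (0 : E d) 1)).toReal) * ‖x‖ ^ (d : ℝ))⁻¹ • x

open scoped InnerProductSpace

theorem DifferentiableAt.fderiv_norm_sq_apply {G F : Type*} [NormedAddCommGroup G]
    [NormedSpace ℝ G] [NormedAddCommGroup F] [InnerProductSpace ℝ F] {f : G → F} {x : G}
    (hf : DifferentiableAt ℝ f x) (h : G) :
    fderiv ℝ (fun q => ‖f q‖ ^ 2) x h = 2 * ⟪f x, fderiv ℝ f x h⟫_ℝ := by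
  rw [hf.hasFDerivAt.norm_sq.fderiv]
  simp

theorem Complex.real_inner_mul_self_right (a c : ℂ) : ⟪a, c * a⟫_ℝ = c.re * ‖a‖ ^ 2 := by
  rw [Complex.inner, mul_assoc, Complex.mul_conj, Complex.re_mul_ofReal, Complex.normSq_eq_norm_sq]

theorem statement19_general (d : ℕ)
    (I : Set ℝ) (hIopen : IsOpen I)
    (α : ℝ × (E d × E d) → ℂ)
    (hα : ContDiffOn ℝ 1 α (I ×ˢ (Set.univ : Set (E d × E d))))
    (F : ℝ → E d → E d)
    (K : ℝ → E d → ℂ)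
    (hKim : ∀ t ∈ I, ∀ x : E d, (K t x).re = 0)
    (heqn : ∀ t ∈ I, ∀ z : E d × E d,
      fderiv ℝ α (t, z) (1, 0) =
        -(fderiv ℝ α (t, z) (0, (z.2, 0))) - fderiv ℝ α (t, z) (0, (0, F t z.1)) +
          K t z.1 * α (t, z)) :
    ∀ t ∈ I, ∀ z : E d × E d,
      fderiv ℝ (fun q : ℝ × (E d × E d) => ‖α q‖ ^ 2) (t, z) (1, 0) +
        fderiv ℝ (fun q : ℝ × (E d × E d) => ‖α q‖ ^ 2) (t, z) (0, (z.2, 0)) +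
        fderiv ℝ (fun q : ℝ × (E d × E d) => ‖α q‖ ^ 2) (t, z) (0, (0, F t z.1)) = 0 := by
  intro t ht z
  have hdiff : DifferentiableAt ℝ α (t, z) :=
    (hα.contDiffAt ((hIopen.prod isOpen_univ).mem_nhds ⟨ht, trivial⟩)).differentiableAt
      one_ne_zero
  have htransport : fderiv ℝ α (t, z) (1, 0) + fderiv ℝ α (t, z) (0, (z.2, 0)) +
      fderiv ℝ α (t, z) (0, (0, F t z.1)) = K t z.1 * α (t, z) := by
    rw [heqn t ht z]; ring
  simp only [hdiff.fderiv_norm_sq_apply]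
  rw [← mul_add, ← mul_add, ← inner_add_right, ← inner_add_right, htransport,
    Complex.real_inner_mul_self_right, hKim t ht, zero_mul, mul_zero]

/-- If `α` is a `C¹` solution of the Hamiltonian Vlasov–Poisson equation
`∂ₜα = −v·∇ₓα − F·∇ᵥα + K α` on an open interval `I` (with the force `F` and the
purely imaginary phase force `K` given by the Newtonian convolutions of the
density `ρ = ∫|α|² dv` and the phase density `φ = ∫ conj(α) ∇ᵥα dv`, all integrals
converging absolutely), then `f = |α|²` solves the classical Vlasov–Poisson equation
`∂ₜf + v·∇ₓf + F·∇ᵥf = 0` on `I × ℝ^{2d}`. -/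
theorem statement19 (d : ℕ) (hd : 3 ≤ d)
    (I : Set ℝ) (hIopen : IsOpen I) (hIconn : I.OrdConnected)
    (α : ℝ × (E d × E d) → ℂ)
    (hα : ContDiffOn ℝ 1 α (I ×ˢ (Set.univ : Set (E d × E d))))
    (ρ : ℝ → E d → ℝ) (hρ : ∀ t y, ρ t y = ∫ w : E d, ‖α (t, (y, w))‖ ^ 2)
    (F : ℝ → E d → E d) (hF : ∀ t x, F t x = -∫ y : E d, ρ t y • gradNewton d (x - y))
    (φ : ℝ → E d → (E d →L[ℝ] ℂ))
    (hφ : ∀ t y, φ t y =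
      ∫ w : E d, (starRingEnd ℂ) (α (t, (y, w))) • fderiv ℝ (fun w' : E d => α (t, (y, w'))) w)
    (K : ℝ → E d → ℂ) (hK : ∀ t x, K t x = -∫ y : E d, φ t y (gradNewton d (x - y)))
    (hint1 : ∀ t ∈ I, ∀ y : E d, Integrable (fun w : E d => ‖α (t, (y, w))‖ ^ 2))
    (hint2 : ∀ t ∈ I, ∀ x : E d, Integrable (fun y : E d => ρ t y • gradNewton d (x - y)))
    (hint3 : ∀ t ∈ I, ∀ y : E d, Integrable (fun w : E d =>
      (starRingEnd ℂ) (α (t, (y, w))) • fderiv ℝ (fun w' : E d => α (t, (y, w'))) w))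
    (hint4 : ∀ t ∈ I, ∀ x : E d, Integrable (fun y : E d => φ t y (gradNewton d (x - y))))
    (hKim : ∀ t ∈ I, ∀ x : E d, (K t x).re = 0)
    (heqn : ∀ t ∈ I, ∀ z : E d × E d,
      fderiv ℝ α (t, z) (1, 0) =
        -(fderiv ℝ α (t, z) (0, (z.2, 0))) - fderiv ℝ α (t, z) (0, (0, F t z.1)) +
          K t z.1 * α (t, z)) :
    ∀ t ∈ I, ∀ z : E d × E d,
      fderiv ℝ (fun q : ℝ × (E d × E d) => ‖α q‖ ^ 2) (t, z) (1, 0) +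
        fderiv ℝ (fun q : ℝ × (E d × E d) => ‖α q‖ ^ 2) (t, z) (0, (z.2, 0)) +
        fderiv ℝ (fun q : ℝ × (E d × E d) => ‖α q‖ ^ 2) (t, z) (0, (0, F t z.1)) = 0 :=
  statement19_general d I hIopen α hα F K hKim heqn
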